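/- arXiv:2503.03356 — 4 statements merged into one kernel-verified Lean document; each statement's English description precedes it below -/
import Mathlib

section
/- Let T be a symmetric order-d tensor of dimension N, let v̂_1,…,v̂_r ∈ ℝ^N be unit vectors such that the tensors v̂_1^{⊗(d−1)},…,v̂_r^{⊗(d−1)} are linearly independent, and let γ̂_1,…,γ̂_r be nonzero reals. Then the matrix (⟨v̂_i,v̂_j⟩^{d−1})_{i,j≤r} is invertible (so flat(T) is well defined), and the following are equivalent: (i) ⟨T − Σ_{j=1}^r γ̂_j v̂_j^{⊗d}, v̂_i^{⊗(d−1)}⟩ = 0 for every i ∈ {1,…,r}; (ii) the stacked vector x = (γ̂_1 v̂_1, …, γ̂_r v̂_r) ∈ ℝ^{rN} satisfies flat(T)·x = γ̂_r·x, i.e., x is an eigenvector of flat(T) with eigenvalue γ̂_r. -/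
open Matrix BigOperators Filter Topology MeasureTheory
open scoped ENNReal NNReal

noncomputable section

/-- An order-`D` tensor of dimension `N`. -/
abbrev Tensor (D N : ℕ) := (Fin D → Fin N) → ℝ

/-- A tensor is symmetric if it is invariant under every permutation of its indices. -/
def IsSymTensor {D N : ℕ} (T : Tensor D N) : Prop :=
  ∀ (π : Equiv.Perm (Fin D)) (i : Fin D → Fin N), T (i ∘ π) = T i

/-- `w^{⊗D}`, the rank-one tensor with entries `w_{i_1} ⋯ w_{i_D}`. -/
def tpow {D N : ℕ} (w : Fin N → ℝ) : Tensor D N := fun i => ∏ k, w (i k)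

/-- `⟨T, v^{⊗ m}⟩ ∈ ℝ^N` for an order-`(m+1)` tensor `T`:
the `j`-th entry is `Σ_{i_1,…,i_m} T_{i_1 … i_m j} v_{i_1} ⋯ v_{i_m}`. -/
def contractVec {m N : ℕ} (T : Tensor (m + 1) N) (v : Fin N → ℝ) : Fin N → ℝ :=
  fun j => ∑ f : Fin m → Fin N, T (Fin.snoc f j) * ∏ k, v (f k)

/-- `⟨T, v^{⊗ m}⟩`, an `N × N` matrix, for an order-`(m+2)` tensor `T`:
the `(i,j)` entry is `Σ_{i_1,…,i_m} T_{i_1 … i_m i j} v_{i_1} ⋯ v_{i_m}`. -/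
def contractMat {m N : ℕ} (T : Tensor (m + 2) N) (v : Fin N → ℝ) :
    Matrix (Fin N) (Fin N) ℝ :=
  Matrix.of fun i j => ∑ f : Fin m → Fin N, T (Fin.snoc (Fin.snoc f i) j) * ∏ k, v (f k)

/-- `⟨T, v^{⊗ D}⟩ ∈ ℝ` (full contraction). -/
def contractAll {D N : ℕ} (T : Tensor D N) (v : Fin N → ℝ) : ℝ :=
  ∑ f, T f * tpow v f

/-- Squared Frobenius norm of a tensor. -/
def frobSq {D N : ℕ} (T : Tensor D N) : ℝ := ∑ f, (T f) ^ 2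

/-- Entrywise (Hadamard) `k`-th power of a matrix. -/
def entryPow {m n : Type} (M : Matrix m n ℝ) (k : ℕ) : Matrix m n ℝ :=
  Matrix.of fun i j => (M i j) ^ k

/-- Gram matrix `(⟨v_i, v_j⟩)_{ij}`. -/
def gram {r N : ℕ} (v : Fin r → Fin N → ℝ) : Matrix (Fin r) (Fin r) ℝ :=
  Matrix.of fun i j => v i ⬝ᵥ v j

/-- `flatMat W A = (W ⊗ Id_N) · BlockDiag(A_1, …, A_r)`. -/
def flatMat {r N : ℕ} (W : Matrix (Fin r) (Fin r) ℝ) (A : Fin r → Matrix (Fin N) (Fin N) ℝ) :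
    Matrix (Fin r × Fin N) (Fin r × Fin N) ℝ :=
  (Matrix.kroneckerMap (· * ·) W (1 : Matrix (Fin N) (Fin N) ℝ)) *
    ((Matrix.blockDiagonal A).reindex (Equiv.prodComm (Fin N) (Fin r))
      (Equiv.prodComm (Fin N) (Fin r)))

/-- `Ŵ = (R^{⊙ k})⁻¹ · diag(γ_r/γ_1, …, γ_r/γ_r)` where `R` is the Gram matrix of `v`. -/
def What {r N : ℕ} (k : ℕ) (γ : Fin (r + 1) → ℝ) (v : Fin (r + 1) → Fin N → ℝ) :
    Matrix (Fin (r + 1)) (Fin (r + 1)) ℝ :=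
  (entryPow (gram v) k)⁻¹ * Matrix.diagonal (fun i => γ (Fin.last r) / γ i)

/-- Symmetrization of a noise tensor: `X_{i_1…i_D} = (1/D!) Σ_{π} W_{i_{π(1)}…i_{π(D)}}`. -/
def symNoise {D N : ℕ} (W : Tensor D N) : Tensor D N :=
  fun i => (1 / (Nat.factorial D : ℝ)) * ∑ π : Equiv.Perm (Fin D), W (i ∘ π)

/-- The spiked tensor `T = Σ_j β_j u_j^{⊗ D} + N^{-1/2} X` (here the dimension is `N`). -/
def spikedT {D r N : ℕ} (β : Fin r → ℝ) (u : Fin r → Fin N → ℝ) (X : Tensor D N) :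
    Tensor D N :=
  fun f => (∑ j, β j * tpow (u j) f) + (1 / Real.sqrt N) * X f

/-- The holomorphic square root of `z² − κ²` on `ℂ ∖ [−|κ|,|κ|]` asymptotic to `z`
at infinity, realized as `(z−|κ|)^{1/2} (z+|κ|)^{1/2}` with principal branches. -/
def sqrtBr (κ : ℝ) (z : ℂ) : ℂ :=
  (z - (|κ| : ℝ)) ^ ((1 : ℂ) / 2) * (z + (|κ| : ℝ)) ^ ((1 : ℂ) / 2)

/-- `ζ_κ(z) = (2/κ²)(−z + √(z²−κ²))` for `κ ≠ 0`, and `ζ_0(z) = −1/z`. -/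
def zetaC (κ : ℝ) (z : ℂ) : ℂ :=
  if κ = 0 then -z⁻¹ else (2 / (κ : ℂ) ^ 2) * (-z + sqrtBr κ z)

/-- The semicircle-type measure `μ_κ`: density `(2/(πκ²))·√((κ²−x²)_+)` for `κ ≠ 0`,
and `δ_0` for `κ = 0`. -/
def semicirc (κ : ℝ) : Measure ℝ :=
  if κ = 0 then Measure.dirac 0
  else MeasureTheory.volume.withDensity fun x =>
    ENNReal.ofReal ((2 / (Real.pi * κ ^ 2)) * Real.sqrt (max (κ ^ 2 - x ^ 2) 0))

/-- Empirical spectral measure of a real square matrix: the uniform measure on (the real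
parts of) the roots of its characteristic polynomial over `ℂ`, with multiplicity. -/
def empSpec {n : Type} [Fintype n] [DecidableEq n] (A : Matrix n n ℝ) : Measure ℝ :=
  ((Fintype.card n : ℝ≥0∞))⁻¹ •
    (Multiset.map (fun z => Measure.dirac z.re) ((A.map Complex.ofReal).charpoly.roots)).sum

/-- The resolvent `(A − z·Id)⁻¹` of a real matrix, as a complex matrix. -/
def resolv {n : Type} [Fintype n] [DecidableEq n] (A : Matrix n n ℝ) (z : ℂ) :
    Matrix n n ℂ :=
  (A.map Complex.ofReal - z • 1)⁻¹

/-!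
By symmetry of `T`, the block `⟨T, v_l^{⊗(d-2)}⟩` maps `v_l` to `⟨T, v_l^{⊗(d-1)}⟩`, and
`⟨v_j^{⊗d}, v_i^{⊗(d-1)}⟩ = ⟨v_i, v_j⟩^{d-1} v_j`. So if `C` is the `r × N` matrix with rows
`⟨T, v_l^{⊗(d-1)}⟩` and `X` the one with rows `γ_l v_l`, the KKT equations read
`C = R^{⊙(d-1)} X`, while the weights `γ_r / γ_l` of `W` cancel the scalings of the blocks of `x`,
so that the eigenvector equation reads `γ_r (R^{⊙(d-1)})⁻¹ C = γ_r X`. These are equivalent since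
`R^{⊙(d-1)}` is the Gram matrix of the linearly independent tensors `v_i^{⊗(d-1)}`.
-/

section Contraction

variable {m N : ℕ}

lemma tpow_snoc (w : Fin N → ℝ) (f : Fin m → Fin N) (a : Fin N) :
    tpow (D := m + 1) w (Fin.snoc f a) = tpow w f * w a := by
  simp only [tpow, Fin.prod_univ_castSucc, Fin.snoc_castSucc, Fin.snoc_last]

lemma sum_tpow_mul_tpow (v w : Fin N → ℝ) :
    ∑ f : Fin m → Fin N, tpow v f * tpow w f = (v ⬝ᵥ w) ^ m := by
  simp only [tpow, dotProduct, ← Finset.prod_mul_distrib]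
  rw [← Fin.prod_const, Finset.prod_univ_sum, Fintype.piFinset_univ]

lemma sum_tuple_snoc {M : Type*} [AddCommMonoid M] (F : (Fin (m + 1) → Fin N) → M) :
    ∑ g, F g = ∑ f : Fin m → Fin N, ∑ b, F (Fin.snoc f b) := by
  rw [← (Fin.snocEquiv fun _ => Fin N).sum_comp, Fintype.sum_prod_type_right]
  rfl

lemma IsSymTensor.apply_snoc_snoc_comm {T : Tensor (m + 2) N} (hT : IsSymTensor T)
    (f : Fin m → Fin N) (a b : Fin N) :
    T (Fin.snoc (Fin.snoc f a) b) = T (Fin.snoc (Fin.snoc f b) a) := by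
  rw [← hT (Equiv.swap (Fin.last m).castSucc (Fin.last (m + 1)))]
  congr 1
  funext x
  induction x using Fin.lastCases with
  | last => simp
  | cast x =>
    induction x using Fin.lastCases with
    | last => simp
    | cast x =>
      rw [Function.comp_apply, Equiv.swap_apply_of_ne_of_ne (by simp) (Fin.castSucc_ne_last _),
        Fin.snoc_castSucc, Fin.snoc_castSucc, Fin.snoc_castSucc, Fin.snoc_castSucc]

lemma IsSymTensor.contractMat_mulVec {T : Tensor (m + 2) N} (hT : IsSymTensor T)
    (v : Fin N → ℝ) : contractMat (m := m) T v *ᵥ v = contractVec (m := m + 1) T v := by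
  funext a
  simp only [mulVec, dotProduct, contractMat, contractVec, of_apply, Finset.sum_mul]
  rw [Finset.sum_comm, sum_tuple_snoc]
  refine Finset.sum_congr rfl fun f _ => Finset.sum_congr rfl fun b _ => ?_
  rw [hT.apply_snoc_snoc_comm, ← tpow, ← tpow, tpow_snoc]
  ring

lemma contractVec_tpow (w v : Fin N → ℝ) :
    contractVec (m := m) (tpow w) v = (w ⬝ᵥ v) ^ m • w := by
  funext a
  simp only [contractVec, tpow_snoc, Pi.smul_apply, smul_eq_mul, ← sum_tpow_mul_tpow,
    Finset.sum_mul]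
  refine Finset.sum_congr rfl fun f _ => ?_
  rw [← tpow]
  ring

lemma contractVec_sub_sum_smul_tpow {ι : Type*} [Fintype ι] (T : Tensor (m + 1) N)
    (c : ι → ℝ) (u : ι → Fin N → ℝ) (v : Fin N → ℝ) :
    contractVec (fun f => T f - ∑ j, c j * tpow (u j) f) v
      = contractVec T v - ∑ j, (c j * (u j ⬝ᵥ v) ^ m) • u j := by
  funext a
  have hu j := congrFun (contractVec_tpow (m := m) (u j) v) a
  simp only [contractVec, Pi.smul_apply, smul_eq_mul] at hu
  simp only [contractVec, Pi.sub_apply, Finset.sum_apply, Pi.smul_apply, smul_eq_mul, sub_mul,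
    Finset.sum_sub_distrib, Finset.sum_mul, mul_assoc]
  rw [Finset.sum_comm]
  simp only [← Finset.mul_sum, hu]

end Contraction

lemma entryPow_gram_eq_gram_tpow {m r N : ℕ} (v : Fin r → Fin N → ℝ) :
    entryPow (_root_.gram v) m
      = Matrix.gram ℝ fun i => WithLp.toLp 2 (tpow (D := m) (v i)) := by
  ext i j
  simp [entryPow, _root_.gram, PiLp.inner_apply, ← sum_tpow_mul_tpow, mul_comm]

lemma isUnit_det_entryPow_gram {m r N : ℕ} (v : Fin r → Fin N → ℝ)
    (hli : LinearIndependent ℝ fun i => tpow (D := m) (v i)) :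
    IsUnit (entryPow (_root_.gram v) m).det := by
  rw [isUnit_iff_ne_zero, entryPow_gram_eq_gram_tpow, det_gram_ne_zero_iff_linearIndependent]
  exact hli.map' (WithLp.linearEquiv 2 ℝ _).symm.toLinearMap (LinearEquiv.ker _)

lemma contractVec_sub_sum_tpow {m r N : ℕ} (T : Tensor (m + 1) N) (γ : Fin r → ℝ)
    (v : Fin r → Fin N → ℝ) (i : Fin r) :
    contractVec (fun f => T f - ∑ j, γ j * tpow (v j) f) (v i)
      = (Matrix.of fun l => contractVec T (v l)) i
        - (entryPow (_root_.gram v) m * Matrix.of fun l a => γ l * v l a) i := by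
  funext a
  simp only [contractVec_sub_sum_smul_tpow, Pi.sub_apply, Finset.sum_apply, Pi.smul_apply,
    smul_eq_mul, mul_apply, of_apply, entryPow, _root_.gram, dotProduct_comm (v i)]
  exact congrArg _ (Finset.sum_congr rfl fun j _ => by ring)

section Flattening

variable {r N : ℕ}

lemma flatMat_apply (W : Matrix (Fin r) (Fin r) ℝ) (A : Fin r → Matrix (Fin N) (Fin N) ℝ)
    (i l : Fin r) (a b : Fin N) : flatMat W A (i, a) (l, b) = W i l * A l a b := by
  simp only [flatMat, mul_apply, kroneckerMap_apply, reindex_apply, submatrix_apply,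
    Equiv.prodComm_symm, Equiv.prodComm_apply, Prod.swap, blockDiagonal_apply,
    Fintype.sum_prod_type, one_apply]
  simp [mul_ite, ite_mul, eq_comm]

lemma flatMat_mulVec_apply (W : Matrix (Fin r) (Fin r) ℝ)
    (A : Fin r → Matrix (Fin N) (Fin N) ℝ) (x : Fin r × Fin N → ℝ) (i : Fin r) (a : Fin N) :
    (flatMat W A *ᵥ x) (i, a) = ∑ l, W i l * (A l *ᵥ fun b => x (l, b)) a := by
  simp only [mulVec, dotProduct, Fintype.sum_prod_type, flatMat_apply, Finset.mul_sum, mul_assoc]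

lemma flatMat_What_mulVec {m : ℕ} {T : Tensor (m + 2) N} (hT : IsSymTensor T)
    (γ : Fin (r + 1) → ℝ) (hγ : ∀ i, γ i ≠ 0) (v : Fin (r + 1) → Fin N → ℝ) :
    flatMat (What (m + 1) γ v) (fun k => contractMat (m := m) T (v k))
        *ᵥ (fun p => γ p.1 * v p.1 p.2)
      = γ (Fin.last r) • fun p => ((entryPow (_root_.gram v) (m + 1))⁻¹
          * Matrix.of fun l => contractVec (m := m + 1) T (v l)) p.1 p.2 := by
  funext ⟨i, a⟩
  simp only [flatMat_mulVec_apply, What, mul_diagonal]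
  simp only [mul_apply, of_apply, Pi.smul_apply, smul_eq_mul, Finset.mul_sum]
  refine Finset.sum_congr rfl fun l _ => ?_
  rw [show (fun b => γ l * v l b) = γ l • v l from rfl, mulVec_smul, hT.contractMat_mulVec]
  field_simp [hγ l]
  simp only [Pi.smul_apply, smul_eq_mul]
  ring

end Flattening

theorem stmt1_general (d r N : ℕ)
    (T : Tensor (d + 3) N) (hT : IsSymTensor T)
    (γhat : Fin (r + 1) → ℝ) (vhat : Fin (r + 1) → Fin N → ℝ)
    (hγ : ∀ i, γhat i ≠ 0)
    (hli : LinearIndependent ℝ (fun i => tpow (D := d + 2) (vhat i))) :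
    IsUnit (entryPow (gram vhat) (d + 2)).det ∧
    ((∀ i : Fin (r + 1),
        contractVec (m := d + 2)
          (fun f => T f - ∑ j, γhat j * tpow (vhat j) f) (vhat i) = 0) ↔
      (flatMat (What (d + 2) γhat vhat)
            (fun k => contractMat (m := d + 1) T (vhat k))).mulVec
          (fun p => γhat p.1 * vhat p.1 p.2) =
        γhat (Fin.last r) • (fun p : Fin (r + 1) × Fin N => γhat p.1 * vhat p.1 p.2)) := by
  have hG := isUnit_det_entryPow_gram vhat hli
  have := invertibleOfIsUnitDet _ hG
  refine ⟨hG, ?_⟩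
  simp only [contractVec_sub_sum_tpow, sub_eq_zero, flatMat_What_mulVec hT γhat hγ vhat,
    (smul_right_injective _ (hγ (Fin.last r))).eq_iff]
  exact funext_iff.symm.trans <| (inv_mul_eq_iff_eq_mul_of_invertible _ _ _).symm.trans
    Function.uncurry_injective.eq_iff.symm

/-- the KKT equations are equivalent to the eigenvector equation for
`flat(T)`.  Order of the tensor is `d + 3 ≥ 3`, rank `r + 1 ≥ 1`. -/
theorem stmt1 (d r N : ℕ) (hN : 1 ≤ N)
    (T : Tensor (d + 3) N) (hT : IsSymTensor T)
    (γhat : Fin (r + 1) → ℝ) (vhat : Fin (r + 1) → Fin N → ℝ)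
    (hunit : ∀ i, vhat i ⬝ᵥ vhat i = 1)
    (hγ : ∀ i, γhat i ≠ 0)
    (hli : LinearIndependent ℝ (fun i => tpow (D := d + 2) (vhat i))) :
    IsUnit (entryPow (gram vhat) (d + 2)).det ∧
    ((∀ i : Fin (r + 1),
        contractVec (m := d + 2)
          (fun f => T f - ∑ j, γhat j * tpow (vhat j) f) (vhat i) = 0) ↔
      (flatMat (What (d + 2) γhat vhat)
            (fun k => contractMat (m := d + 1) T (vhat k))).mulVec
          (fun p => γhat p.1 * vhat p.1 p.2) =
        γhat (Fin.last r) • (fun p : Fin (r + 1) × Fin N => γhat p.1 * vhat p.1 p.2)) :=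
  stmt1_general d r N T hT γhat vhat hγ hli
end
end

section
/- Consider the spiked tensor model and a sequence of critical points satisfying Assumption A(r) and Assumption B (with s = r). Then, almost surely, the normalized squared error H_N = ‖T − Σ_{i=1}^r γ̂_i v̂_i^{⊗d}‖_F² − (1/N)·‖X‖_F² converges, as N → ∞, to βᵀ·R_uu^{⊙d}·β − γᵀ·R_vv^{⊙d}·γ, where β = (β_1,…,β_r), γ = (γ_1,…,γ_r), and R^{⊙d} denotes the entrywise d-th power of the matrix R. -/
open Matrix BigOperators Filter Topology MeasureTheory
open scoped ENNReal NNReal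

open ProbabilityTheory

/-!
Write the residual tensor as `R = S + N^{-1/2} X - G` with `S = Σ β_j u_j^{⊗d}` and
`G = Σ γ̂_j v̂_j^{⊗d}`. The critical-point equations say `⟨R, v̂_i^{⊗d}⟩ = 0` for every `i`, hence
`R ⊥ G`, and then `‖R‖² = ‖S‖² - ‖G‖² + 2 N^{-1/2} ⟨X, S⟩ + N^{-1} ‖X‖²`. The norms `‖S‖²` and
`‖G‖²` are the quadratic forms of `β` and `γ̂` in the entrywise `d`-th powers of the Gram
matrices, which converge by Assumptions A and B. Each `⟨X, u_i^{⊗d}⟩ = ⟨W, u_i^{⊗d}⟩` is a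
standard Gaussian, since `u_i^{⊗d}` is a unit tensor, so its tail bound `2 exp(-ε² N / 2)` is
summable in `N` and Borel–Cantelli makes the cross term vanish almost surely.
-/

theorem dotProduct_self_add_sub_of_dotProduct_eq_zero {α R : Type*} [Fintype α] [CommRing R]
    {a e g : α → R} (h : (a + e - g) ⬝ᵥ g = 0) :
    (a + e - g) ⬝ᵥ (a + e - g) = a ⬝ᵥ a + 2 * (a ⬝ᵥ e) + e ⬝ᵥ e - g ⬝ᵥ g := by
  simp only [add_dotProduct, sub_dotProduct, dotProduct_add, dotProduct_sub] at h ⊢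
  rw [dotProduct_comm e a, dotProduct_comm g a, dotProduct_comm g e] at *
  linear_combination (-2 : R) * h

theorem frobSq_eq_dotProduct {D N : ℕ} (T : Tensor D N) : frobSq T = T ⬝ᵥ T := by
  simp only [frobSq, dotProduct, sq]

theorem tpow_dotProduct_tpow {D N : ℕ} (w v : Fin N → ℝ) :
    (tpow w : Tensor D N) ⬝ᵥ tpow v = (w ⬝ᵥ v) ^ D := by
  simp only [dotProduct, tpow, ← Finset.prod_mul_distrib]
  rw [← Fintype.prod_sum (fun (_ : Fin D) j => w j * v j), Finset.prod_const,
    Finset.card_univ, Fintype.card_fin]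

theorem sum_smul_tpow_dotProduct_sum_smul_tpow {ι κ : Type*} [Fintype ι] [Fintype κ]
    {D N : ℕ} (a : ι → ℝ) (b : κ → ℝ) (P : ι → Fin N → ℝ) (Q : κ → Fin N → ℝ) :
    (∑ i, a i • tpow (P i) : Tensor D N) ⬝ᵥ ∑ j, b j • tpow (Q j)
      = ∑ i, ∑ j, a i * b j * (P i ⬝ᵥ Q j) ^ D := by
  simp only [sum_dotProduct, dotProduct_sum, smul_dotProduct, dotProduct_smul,
    tpow_dotProduct_tpow, smul_eq_mul, Finset.mul_sum]
  rw [Finset.sum_comm]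
  exact Finset.sum_congr rfl fun i _ => Finset.sum_congr rfl fun j _ => by ring

theorem symNoise_dotProduct_tpow {D N : ℕ} (W : Tensor D N) (v : Fin N → ℝ) :
    symNoise W ⬝ᵥ tpow v = W ⬝ᵥ tpow v := by
  have hperm : ∀ π : Equiv.Perm (Fin D),
      ∑ f : Fin D → Fin N, W (f ∘ π) * tpow v f = W ⬝ᵥ tpow v := fun π =>
    Fintype.sum_equiv (Equiv.arrowCongr π.symm (Equiv.refl (Fin N))) _ _ fun f => by
      simpa [tpow, Equiv.arrowCongr] using
        congrArg (W (f ∘ π) * ·) (Equiv.prod_comp π (fun k => v (f k))).symm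
  have hD : (D.factorial : ℝ) ≠ 0 := by positivity
  simp only [dotProduct, symNoise, mul_assoc, Finset.sum_mul, ← Finset.mul_sum]
  rw [Finset.sum_comm]
  simp only [hperm, Finset.sum_const, Finset.card_univ, Fintype.card_perm, Fintype.card_fin,
    nsmul_eq_mul, dotProduct]
  field_simp

theorem dotProduct_tpow_eq_dotProduct_contractVec {m N : ℕ} (T : Tensor (m + 1) N)
    (v : Fin N → ℝ) : T ⬝ᵥ tpow v = v ⬝ᵥ contractVec T v := by
  have hsnoc : ∀ (f : Fin m → Fin N) j,
      tpow (D := m + 1) v (Fin.snoc f j) = (∏ k, v (f k)) * v j := fun f j => by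
    simp [tpow, Fin.prod_univ_castSucc]
  rw [dotProduct, ← (Fin.snocEquiv fun _ => Fin N).sum_comp (fun g => T g * tpow v g),
    Fintype.sum_prod_type]
  simp only [dotProduct, contractVec, Finset.mul_sum]
  refine Finset.sum_congr rfl fun j _ => Finset.sum_congr rfl fun f _ => ?_
  simp only [Fin.snocEquiv, Equiv.coe_fn_mk, hsnoc]
  ring

theorem frobSq_sub_eq_of_dotProduct_tpow_eq_zero {D r N : ℕ} (β γ : Fin r → ℝ)
    (u v : Fin r → Fin N → ℝ) (X : Tensor D N)
    (hcrit : ∀ i, (fun f => spikedT β u X f - ∑ j, γ j * tpow (v j) f) ⬝ᵥ tpow (v i) = 0) :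
    frobSq (fun f => spikedT β u X f - ∑ j, γ j * tpow (v j) f) - (1 / N) * frobSq X
      = (∑ i, ∑ j, β i * β j * (u i ⬝ᵥ u j) ^ D) - (∑ i, ∑ j, γ i * γ j * (v i ⬝ᵥ v j) ^ D)
        + 2 / √N * ∑ i, β i * (X ⬝ᵥ tpow (u i)) := by
  set a : Tensor D N := ∑ j, β j • tpow (u j)
  set g : Tensor D N := ∑ j, γ j • tpow (v j)
  have hres : (fun f => spikedT β u X f - ∑ j, γ j * tpow (v j) f) = a + (1 / √N) • X - g := by
    ext f
    simp [a, g, spikedT, Finset.sum_apply]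
  have horth : (a + (1 / √N) • X - g) ⬝ᵥ g = 0 := by
    simp only [g, dotProduct_sum, dotProduct_smul, ← hres, hcrit, smul_zero, Finset.sum_const_zero]
  rw [hres, frobSq_eq_dotProduct, frobSq_eq_dotProduct,
    dotProduct_self_add_sub_of_dotProduct_eq_zero horth,
    sum_smul_tpow_dotProduct_sum_smul_tpow, sum_smul_tpow_dotProduct_sum_smul_tpow]
  simp only [a, dotProduct_smul, sum_dotProduct, smul_dotProduct, smul_eq_mul,
    dotProduct_comm (tpow _) X]
  have hN : (1 / √N) * (1 / √N) = 1 / (N : ℝ) := by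
    rw [one_div_mul_one_div, Real.mul_self_sqrt (Nat.cast_nonneg N)]
  rw [← mul_assoc _ _ (X ⬝ᵥ X), hN]
  ring

theorem frobSq_spikedT_sub_eq_of_contractVec_eq_zero {m r N : ℕ} (β γ : Fin r → ℝ)
    (u v : Fin r → Fin (N + 1) → ℝ) (W : Tensor (m + 1) (N + 1))
    (hcrit : ∀ i, contractVec
      (fun f => spikedT β u (symNoise W) f - ∑ j, γ j * tpow (v j) f) (v i) = 0) :
    frobSq (fun f => spikedT β u (symNoise W) f - ∑ j, γ j * tpow (v j) f)
        - (1 / ((N : ℝ) + 1)) * frobSq (symNoise W)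
      = (∑ i, ∑ j, β i * β j * (u i ⬝ᵥ u j) ^ (m + 1))
        - (∑ i, ∑ j, γ i * γ j * (v i ⬝ᵥ v j) ^ (m + 1))
        + ∑ i, 2 * β i * (W ⬝ᵥ tpow (u i) / √(N + 1)) := by
  have h := frobSq_sub_eq_of_dotProduct_tpow_eq_zero β γ u v (symNoise W) fun i => by
    rw [dotProduct_tpow_eq_dotProduct_contractVec, hcrit i, dotProduct_zero]
  push_cast at h
  rw [h]
  simp only [symNoise_dotProduct_tpow, Finset.mul_sum]
  congr 1
  exact Finset.sum_congr rfl fun i _ => by ring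

theorem hasSubgaussianMGF_id_gaussianReal (v : ℝ≥0) : HasSubgaussianMGF id v (gaussianReal 0 v) :=
  ⟨integrable_exp_mul_gaussianReal, fun t => by simp [mgf_id_gaussianReal]⟩

theorem hasSubgaussianMGF_dotProduct_pi_gaussianReal {ι : Type*} [Fintype ι] (a : ι → ℝ) :
    HasSubgaussianMGF (fun x => x ⬝ᵥ a) (a ⬝ᵥ a).toNNReal
      (Measure.pi fun _ : ι => gaussianReal 0 1) := by
  have hcoord : ∀ i, HasSubgaussianMGF (fun x : ι → ℝ => a i * x i) (a i ^ 2).toNNReal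
      (Measure.pi fun _ : ι => gaussianReal 0 1) := fun i => by
    have h : HasSubgaussianMGF id 1
        ((Measure.pi fun _ : ι => gaussianReal 0 1).map (Function.eval i)) := by
      rw [(measurePreserving_eval _ i).map_eq]
      exact hasSubgaussianMGF_id_gaussianReal 1
    convert (h.of_map (measurable_pi_apply (X := fun _ : ι => ℝ) i).aemeasurable).const_mul (a i)
      using 1
    · rfl
    · ext
      exact (Real.coe_toNNReal _ (sq_nonneg _)).trans (mul_one _).symm
  have hindep : iIndepFun (fun i (x : ι → ℝ) => a i * x i)
      (Measure.pi fun _ : ι => gaussianReal 0 1) :=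
    iIndepFun_pi (X := fun i y => a i * y) fun i => (measurable_const_mul (a i)).aemeasurable
  convert HasSubgaussianMGF.sum_of_iIndepFun hindep (s := Finset.univ) fun i _ => hcoord i
    using 1
  · ext x
    simp only [dotProduct, mul_comm]
  · rw [← Real.toNNReal_sum_of_nonneg fun i _ => sq_nonneg (a i)]
    simp only [dotProduct, sq]

theorem measureReal_pi_gaussianReal_abs_dotProduct_ge_le {ι : Type*} [Fintype ι] (a : ι → ℝ)
    {t : ℝ} (ht : 0 ≤ t) :
    (Measure.pi fun _ : ι => gaussianReal 0 1).real {x | t ≤ |x ⬝ᵥ a|}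
      ≤ 2 * Real.exp (-t ^ 2 / (2 * (a ⬝ᵥ a))) := by
  have h := hasSubgaussianMGF_dotProduct_pi_gaussianReal a
  have hc : ((a ⬝ᵥ a).toNNReal : ℝ) = a ⬝ᵥ a :=
    Real.coe_toNNReal _ (dotProduct_self_star_nonneg a)
  have hsplit : {x : ι → ℝ | t ≤ |x ⬝ᵥ a|} ⊆ {x | t ≤ x ⬝ᵥ a} ∪ {x | t ≤ -(x ⬝ᵥ a)} := by
    intro x hx
    rw [Set.mem_ofPred_eq] at hx
    exact le_abs.mp hx
  calc _ ≤ _ := measureReal_mono hsplit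
    _ ≤ _ := measureReal_union_le _ _
    _ ≤ _ := add_le_add (hc ▸ h.measure_ge_le ht) (hc ▸ h.neg.measure_ge_le ht)
    _ = _ := (two_mul _).symm

theorem ae_tendsto_zero_of_summable_measureReal_abs_ge {Ω : Type*} [MeasurableSpace Ω]
    {μ : Measure Ω} [IsFiniteMeasure μ] {Z : ℕ → Ω → ℝ}
    (h : ∀ ε > 0, Summable fun n => μ.real {ω | ε ≤ |Z n ω|}) :
    ∀ᵐ ω ∂μ, Tendsto (fun n => Z n ω) atTop (𝓝 0) := by
  have hsmall : ∀ k : ℕ, ∀ᵐ ω ∂μ, ∀ᶠ n in atTop, |Z n ω| < 1 / (k + 1) := fun k => by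
    have hsum := h (1 / (k + 1)) Nat.one_div_pos_of_nat
    have hfin : ∑' n, μ {ω | 1 / (k + 1) ≤ |Z n ω|} ≠ ∞ := by
      simp_rw [← ofReal_measureReal (measure_ne_top μ _)]
      rw [← ENNReal.ofReal_tsum_of_nonneg (fun _ => measureReal_nonneg) hsum]
      exact ENNReal.ofReal_ne_top
    filter_upwards [ae_eventually_notMem hfin] with ω hω
    exact hω.mono fun n hn => not_le.mp hn
  filter_upwards [ae_all_iff.mpr hsmall] with ω hω
  refine NormedAddGroup.tendsto_nhds_zero.mpr fun ε hε => ?_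
  obtain ⟨k, hk⟩ := exists_nat_one_div_lt hε
  exact (hω k).mono fun n hn => (Real.norm_eq_abs _).symm ▸ hn.trans hk

theorem ae_tendsto_dotProduct_div_sqrt_zero {Ω : Type*} [MeasurableSpace Ω] {P : Measure Ω}
    [IsFiniteMeasure P] {ι : ℕ → Type*} [∀ n, Fintype (ι n)] (W : ∀ n, Ω → ι n → ℝ)
    (hW : ∀ n, Measurable (W n))
    (hlaw : ∀ n, P.map (W n) = Measure.pi fun _ : ι n => gaussianReal 0 1)
    (a : ∀ n, ι n → ℝ) (ha : ∀ n, a n ⬝ᵥ a n = 1) :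
    ∀ᵐ ω ∂P, Tendsto (fun n => W n ω ⬝ᵥ a n / √(n + 1)) atTop (𝓝 0) := by
  refine ae_tendsto_zero_of_summable_measureReal_abs_ge fun ε hε => ?_
  have htail : ∀ n : ℕ, P.real {ω | ε ≤ |W n ω ⬝ᵥ a n / √(n + 1)|}
      ≤ 2 * Real.exp (-(ε ^ 2 / 2)) * Real.exp (n * -(ε ^ 2 / 2)) := fun n => by
    have hsqrt : 0 < √((n : ℝ) + 1) := by positivity
    have hset : {ω | ε ≤ |W n ω ⬝ᵥ a n / √(n + 1)|}
        = W n ⁻¹' {x | ε * √(n + 1) ≤ |x ⬝ᵥ a n|} := by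
      ext ω
      simp [abs_div, abs_of_pos hsqrt, le_div_iff₀ hsqrt]
    have hmeas : MeasurableSet {x : ι n → ℝ | ε * √(n + 1) ≤ |x ⬝ᵥ a n|} :=
      measurableSet_le measurable_const (by fun_prop)
    rw [hset, ← map_measureReal_apply (hW n) hmeas, hlaw n]
    refine (measureReal_pi_gaussianReal_abs_dotProduct_ge_le (a n) (by positivity)).trans ?_
    rw [ha n, mul_pow, Real.sq_sqrt (by positivity), mul_assoc, ← Real.exp_add]
    exact le_of_eq (by ring_nf)
  exact .of_nonneg_of_le (fun _ => measureReal_nonneg) htail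
    ((Real.summable_exp_nat_mul_iff.mpr (by linarith [sq_pos_of_pos hε])).mul_left _)

/-- Order `d + 3 ≥ 3`, rank `r + 1 ≥ 1`, dimension `N + 1`. -/
theorem stmt13_general (d r : ℕ)
    (Ω : Type) [MeasurableSpace Ω] (P : Measure Ω) [IsProbabilityMeasure P]
    (W : (N : ℕ) → Ω → Tensor (d + 3) (N + 1))
    (hWmeas : ∀ N, Measurable (W N))
    (hWlaw : ∀ N, Measure.map (W N) P =
      Measure.pi fun _ : Fin (d + 3) → Fin (N + 1) => ProbabilityTheory.gaussianReal 0 1)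
    (β : Fin (r + 1) → ℝ)
    (u : (N : ℕ) → Fin (r + 1) → Fin (N + 1) → ℝ)
    (hu : ∀ N i, u N i ⬝ᵥ u N i = 1)
    (γhat : (N : ℕ) → Fin (r + 1) → Ω → ℝ)
    (vhat : (N : ℕ) → Fin (r + 1) → Ω → (Fin (N + 1) → ℝ))
    (hcrit : ∀ N, ∀ᵐ ω ∂P, ∀ i : Fin (r + 1),
      contractVec (m := d + 2)
        (fun f => spikedT β (u N) (symNoise (W N ω)) f
          - ∑ j, γhat N j ω * tpow (vhat N j ω) f) (vhat N i ω) = 0)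
    (γ : Fin (r + 1) → ℝ)
    (Rvv : Matrix (Fin (r + 1)) (Fin (r + 1)) ℝ)
    (hAlim : ∀ᵐ ω ∂P,
      (∀ i, Tendsto (fun N => γhat N i ω) atTop (𝓝 (γ i))) ∧
      (∀ i j, Tendsto (fun N => vhat N i ω ⬝ᵥ vhat N j ω) atTop (𝓝 (Rvv i j))))
    (Ruu : Matrix (Fin (r + 1)) (Fin (r + 1)) ℝ)
    (hBuu : ∀ i j : Fin (r + 1),
      Tendsto (fun N => u N i ⬝ᵥ u N j) atTop (𝓝 (Ruu i j))) :
    ∀ᵐ ω ∂P,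
      Tendsto (fun N : ℕ =>
          frobSq (fun f => spikedT β (u N) (symNoise (W N ω)) f
            - ∑ i, γhat N i ω * tpow (vhat N i ω) f)
          - (1 / ((N : ℝ) + 1)) * frobSq (symNoise (W N ω)))
        atTop
        (𝓝 ((∑ i, ∑ j, β i * β j * Ruu i j ^ (d + 3)) -
          ∑ i, ∑ j, γ i * γ j * Rvv i j ^ (d + 3))) := by
  have hnoise : ∀ i, ∀ᵐ ω ∂P, Tendsto (fun N : ℕ => W N ω ⬝ᵥ tpow (u N i) / √(N + 1))
      atTop (𝓝 0) := fun i =>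
    ae_tendsto_dotProduct_div_sqrt_zero W hWmeas hWlaw _ fun N => by
      rw [tpow_dotProduct_tpow, hu, one_pow]
  filter_upwards [hAlim, ae_all_iff.mpr hnoise, ae_all_iff.mpr hcrit]
    with ω ⟨hγlim, hvlim⟩ hnoiseω hcritω
  rw [tendsto_congr fun N => frobSq_spikedT_sub_eq_of_contractVec_eq_zero β _ (u N) _ (W N ω)
    (hcritω N), ← add_zero (_ - _)]
  refine (Tendsto.sub ?_ ?_).add ?_
  · exact tendsto_finsetSum _ fun i _ => tendsto_finsetSum _ fun j _ =>
      ((hBuu i j).pow _).const_mul _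
  · exact tendsto_finsetSum _ fun i _ => tendsto_finsetSum _ fun j _ =>
      ((hγlim i).mul (hγlim j)).mul ((hvlim i j).pow _)
  · simpa using tendsto_finsetSum Finset.univ fun i _ => (hnoiseω i).const_mul (2 * β i)

/-- almost sure limit of the normalized squared error
`H_N = ‖T − Σ_i γ̂_i v̂_i^{⊗d}‖_F² − (1/N)‖X‖_F²` under Assumptions A(r) and B.
Order is `d + 3 ≥ 3`, rank `r + 1 ≥ 1`, dimension `N + 1`. -/
theorem stmt13 (d r : ℕ)
    (Ω : Type) [MeasurableSpace Ω] (P : Measure Ω) [IsProbabilityMeasure P]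
    (W : (N : ℕ) → Ω → Tensor (d + 3) (N + 1))
    (hWmeas : ∀ N, Measurable (W N))
    (hWlaw : ∀ N, Measure.map (W N) P =
      Measure.pi fun _ : Fin (d + 3) → Fin (N + 1) => ProbabilityTheory.gaussianReal 0 1)
    (β : Fin (r + 1) → ℝ) (hβ : ∀ i j : Fin (r + 1), i ≤ j → |β j| ≤ |β i|)
    (u : (N : ℕ) → Fin (r + 1) → Fin (N + 1) → ℝ)
    (hu : ∀ N i, u N i ⬝ᵥ u N i = 1)
    (γhat : (N : ℕ) → Fin (r + 1) → Ω → ℝ)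
    (vhat : (N : ℕ) → Fin (r + 1) → Ω → (Fin (N + 1) → ℝ))
    (hγmeas : ∀ N i, Measurable (γhat N i))
    (hvmeas : ∀ N i, Measurable (vhat N i))
    (hvunit : ∀ N i ω, vhat N i ω ⬝ᵥ vhat N i ω = 1)
    (hγord : ∀ N ω, ∀ i j : Fin (r + 1), i ≤ j → |γhat N j ω| ≤ |γhat N i ω|)
    (hγne : ∀ N ω i, γhat N i ω ≠ 0)
    (hcrit : ∀ N, ∀ᵐ ω ∂P, ∀ i : Fin (r + 1),
      contractVec (m := d + 2)
        (fun f => spikedT β (u N) (symNoise (W N ω)) f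
          - ∑ j, γhat N j ω * tpow (vhat N j ω) f) (vhat N i ω) = 0)
    (γ : Fin (r + 1) → ℝ) (hγ0 : ∀ i, γ i ≠ 0)
    (Rvv : Matrix (Fin (r + 1)) (Fin (r + 1)) ℝ)
    (hRvvInv : IsUnit (entryPow Rvv (d + 2)).det)
    (hAlim : ∀ᵐ ω ∂P,
      (∀ i, Tendsto (fun N => γhat N i ω) atTop (𝓝 (γ i))) ∧
      (∀ i j, Tendsto (fun N => vhat N i ω ⬝ᵥ vhat N j ω) atTop (𝓝 (Rvv i j))))
    (Ruv : Matrix (Fin (r + 1)) (Fin (r + 1)) ℝ)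
    (Ruu : Matrix (Fin (r + 1)) (Fin (r + 1)) ℝ)
    (hBuv : ∀ᵐ ω ∂P, ∀ i j : Fin (r + 1),
      Tendsto (fun N => u N i ⬝ᵥ vhat N j ω) atTop (𝓝 (Ruv i j)))
    (hBuu : ∀ i j : Fin (r + 1),
      Tendsto (fun N => u N i ⬝ᵥ u N j) atTop (𝓝 (Ruu i j))) :
    ∀ᵐ ω ∂P,
      Tendsto (fun N : ℕ =>
          frobSq (fun f => spikedT β (u N) (symNoise (W N ω)) f
            - ∑ i, γhat N i ω * tpow (vhat N i ω) f)
          - (1 / ((N : ℝ) + 1)) * frobSq (symNoise (W N ω)))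
        atTop
        (𝓝 ((∑ i, ∑ j, β i * β j * Ruu i j ^ (d + 3)) -
          ∑ i, ∑ j, γ i * γ j * Rvv i j ^ (d + 3))) :=
  stmt13_general d r Ω P W hWmeas hWlaw β u hu γhat vhat hcrit γ Rvv hAlim Ruu hBuu
end

section
/- Let d ≥ 3 and let Ĉ be an invertible 2×2 real matrix with inverse Ĉ^{−1} = (m_{ij})_{i,j≤2}. Suppose ξ_1, ξ_2, η, θ ∈ ℝ with ξ_1 ≠ 0, ξ_2 ≠ 0 are such that the matrix Ñ = diag(ξ_1, ξ_2)·[[1, η],[θ, 1]] satisfies Ñᵀ·Ñ_{d−1} = Ĉ, where Ñ_{d−1} denotes the entrywise (d−1)-st power of Ñ. Then: (i) the matrix [[1, η^{d−1}],[θ^{d−1}, 1]]·Ĉ^{−1}·[[1, η],[θ, 1]]ᵀ equals diag(ξ_1^{−d}, ξ_2^{−d}); (ii) if η^{d−1}·m_{21} + m_{11} ≠ 0 then θ = −(η^{d−1}·m_{22} + m_{12})/(η^{d−1}·m_{21} + m_{11}); (iii) η satisfies (m_{22}·η + m_{21})·(−m_{21}·η^{d−1} − m_{11})^{d−1} + (m_{22}·η^{d−1}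 + m_{12})^{d−1}·(m_{12}·η + m_{11}) = 0; and (iv) ξ_1^{−d} = [1, η^{d−1}]·Ĉ^{−1}·[1, η]ᵀ and ξ_2^{−d} = [θ^{d−1}, 1]·Ĉ^{−1}·[θ, 1]ᵀ. -/
/-!
Write `Ñ = diag(ξ₁, ξ₂) · A` with `A = [[1, η], [θ, 1]]`. The entrywise power of a row-scaled
matrix is the row-scaled entrywise power, so `Ĉ = Ñᵀ Ñ_{d-1} = Aᵀ · diag(ξ₁ᵈ, ξ₂ᵈ) · A_{d-1}`.
Invertibility of `Ĉ` makes all three factors invertible, and solving for the middle factor gives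
(i). Its diagonal entries are (iv); its off-diagonal entries vanish, which is linear in `θ` resp.
in `θ^{d-1}`: the first equation gives (ii), and eliminating `θ` between the two gives (iii).
-/

open Matrix

noncomputable section

theorem mul_inv_mul_eq_inv_of_eq_mul_mul {n R : Type*} [Fintype n] [DecidableEq n] [CommRing R]
    {C P D E : Matrix n n R} (hC : IsUnit C.det) (h : C = P * D * E) :
    E * C⁻¹ * P = D⁻¹ := by
  subst h
  rw [det_mul, det_mul] at hC
  have hE := isUnit_of_mul_isUnit_right hC
  have hP := isUnit_of_mul_isUnit_left (isUnit_of_mul_isUnit_left hC)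
  rw [Matrix.mul_inv_rev, Matrix.mul_inv_rev, ← Matrix.mul_assoc, ← Matrix.mul_assoc,
    mul_nonsing_inv _ hE, Matrix.one_mul, Matrix.mul_assoc, nonsing_inv_mul _ hP, Matrix.mul_one]

theorem entryPow_diagonal_mul {n m : Type} [Fintype n] [DecidableEq n] (ξ : n → ℝ)
    (A : Matrix n m ℝ) (k : ℕ) :
    entryPow (diagonal ξ * A) k = diagonal (ξ ^ k) * entryPow A k := by
  ext i j
  simp [entryPow, mul_pow]

theorem transpose_mul_entryPow_diagonal_mul {n : Type} [Fintype n] [DecidableEq n]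
    (ξ : n → ℝ) (A : Matrix n n ℝ) (k : ℕ) :
    (diagonal ξ * A)ᵀ * entryPow (diagonal ξ * A) k =
      Aᵀ * diagonal (ξ ^ (k + 1)) * entryPow A k := by
  rw [entryPow_diagonal_mul, transpose_mul, diagonal_transpose, Matrix.mul_assoc,
    ← Matrix.mul_assoc (diagonal ξ), diagonal_mul_diagonal, ← Matrix.mul_assoc, pow_succ',
    Pi.mul_def]

theorem entryPow_fin_two (a b c e : ℝ) (k : ℕ) :
    entryPow !![a, b; c, e] k = !![a ^ k, b ^ k; c ^ k, e ^ k] := by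
  ext i j
  fin_cases i <;> fin_cases j <;> rfl

theorem eq_diagonal_mul_fin_two (ξ₁ ξ₂ η θ : ℝ) :
    !![ξ₁, ξ₁ * η; ξ₂ * θ, ξ₂] = diagonal ![ξ₁, ξ₂] * !![1, η; θ, 1] := by
  ext i j
  fin_cases i <;> fin_cases j <;> simp

theorem mul_neg_pow_add_pow_mul_eq_zero {R : Type*} [CommRing R] {θ a b c e : R} (k : ℕ)
    (hab : θ * a + b = 0) (hce : θ ^ k * c + e = 0) : e * (-a) ^ k + b ^ k * c = 0 := by
  rw [eq_neg_of_add_eq_zero_right hab, ← mul_neg, mul_pow]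
  linear_combination (-a) ^ k * hce

/-- `C⁻¹ i j` is the paper's `m_{i+1,j+1}`. -/
theorem stmt16 (d : ℕ) (hd : 3 ≤ d)
    (C : Matrix (Fin 2) (Fin 2) ℝ) (hC : IsUnit C.det)
    (ξ₁ ξ₂ η θ : ℝ) (hξ₁ : ξ₁ ≠ 0) (hξ₂ : ξ₂ ≠ 0)
    (heq : (Matrix.of !![ξ₁, ξ₁ * η; ξ₂ * θ, ξ₂])ᵀ *
      entryPow (Matrix.of !![ξ₁, ξ₁ * η; ξ₂ * θ, ξ₂]) (d - 1) = C) :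
    (Matrix.of !![(1 : ℝ), η ^ (d - 1); θ ^ (d - 1), 1] * C⁻¹ *
        (Matrix.of !![(1 : ℝ), η; θ, 1])ᵀ =
      Matrix.of !![(ξ₁ ^ d)⁻¹, 0; 0, (ξ₂ ^ d)⁻¹]) ∧
    (η ^ (d - 1) * C⁻¹ 1 0 + C⁻¹ 0 0 ≠ 0 →
      θ = -(η ^ (d - 1) * C⁻¹ 1 1 + C⁻¹ 0 1) / (η ^ (d - 1) * C⁻¹ 1 0 + C⁻¹ 0 0)) ∧
    ((C⁻¹ 1 1 * η + C⁻¹ 1 0) * (-(C⁻¹ 1 0) * η ^ (d - 1) - C⁻¹ 0 0) ^ (d - 1) +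
      (C⁻¹ 1 1 * η ^ (d - 1) + C⁻¹ 0 1) ^ (d - 1) * (C⁻¹ 0 1 * η + C⁻¹ 0 0) = 0) ∧
    ((ξ₁ ^ d)⁻¹ = ![(1 : ℝ), η ^ (d - 1)] ⬝ᵥ C⁻¹.mulVec ![1, η] ∧
      (ξ₂ ^ d)⁻¹ = ![θ ^ (d - 1), (1 : ℝ)] ⬝ᵥ C⁻¹.mulVec ![θ, 1]) := by
  obtain ⟨k, rfl⟩ : ∃ k, d = k + 1 := ⟨d - 1, by omega⟩
  have of_eq (M : Matrix (Fin 2) (Fin 2) ℝ) : Matrix.of M = M := rfl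
  simp only [Nat.add_sub_cancel, of_eq] at heq ⊢
  have hfac : C = (!![(1 : ℝ), η; θ, 1])ᵀ * diagonal (![ξ₁, ξ₂] ^ (k + 1)) *
      !![(1 : ℝ), η ^ k; θ ^ k, 1] := by
    rw [← heq, eq_diagonal_mul_fin_two, transpose_mul_entryPow_diagonal_mul, entryPow_fin_two,
      one_pow]
  have hinv : (diagonal (![ξ₁, ξ₂] ^ (k + 1)))⁻¹ =
      !![(ξ₁ ^ (k + 1))⁻¹, 0; 0, (ξ₂ ^ (k + 1))⁻¹] := by
    refine inv_eq_left_inv ?_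
    ext i j
    fin_cases i <;> fin_cases j <;> simp [hξ₁, hξ₂]
  have hdiag := mul_inv_mul_eq_inv_of_eq_mul_mul hC hfac
  rw [hinv] at hdiag
  have hentry (i j : Fin 2) := congrFun₂ hdiag i j
  simp only [mul_mul_apply, transpose_transpose] at hentry
  have h01 := hentry 0 1
  have h10 := hentry 1 0
  simp only [dotProduct, mulVec, Fin.sum_univ_two, of_apply, cons_val', cons_val_fin_one,
    cons_val_zero, cons_val_one] at h01 h10
  have hθ : θ * (η ^ k * C⁻¹ 1 0 + C⁻¹ 0 0) + (η ^ k * C⁻¹ 1 1 + C⁻¹ 0 1) = 0 := by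
    linear_combination h01
  refine ⟨hdiag, fun ha => eq_div_of_mul_eq ha (by linear_combination hθ), ?_,
    (hentry 0 0).symm, (hentry 1 1).symm⟩
  linear_combination mul_neg_pow_add_pow_mul_eq_zero k hθ h10

end
end

section
/- Let κ ∈ ℝ with κ ≠ 0 and let z ∈ ℂ with Im z > 0. Then the quadratic equation (κ²/4)·w² + z·w + 1 = 0 has exactly one solution w ∈ ℂ with Im w > 0; that is, among its two complex roots (counted with multiplicity), precisely one lies in the open upper half-plane. -/
/-- for real `κ ≠ 0` and `z` in the open upper half-plane, the quadratic
equation `(κ²/4)·w² + z·w + 1 = 0` has exactly one solution `w` with `Im w > 0`. -/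
theorem stmt19 (κ : ℝ) (hκ : κ ≠ 0) (z : ℂ) (hz : 0 < z.im) :
    ∃! w : ℂ, ((κ : ℂ) ^ 2 / 4) * w ^ 2 + z * w + 1 = 0 ∧ 0 < w.im := by
  set r : ℝ := κ ^ 2 / 4 with hrdef
  have hr : 0 < r := by positivity
  have haeq : ((κ : ℂ) ^ 2 / 4) = ((r : ℝ) : ℂ) := by push_cast [hrdef]; ring
  set a : ℂ := ((r : ℝ) : ℂ) with hadef
  have ha0 : a ≠ 0 := by
    simp [hadef, Complex.ofReal_ne_zero]; exact ne_of_gt hr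
  rw [haeq]
  -- any root is nonzero and has nonzero imaginary part
  have hroot_ne : ∀ w : ℂ, a * w ^ 2 + z * w + 1 = 0 → w ≠ 0 := by
    intro w hw h0
    simp [h0] at hw
  have hroot_im : ∀ w : ℂ, a * w ^ 2 + z * w + 1 = 0 → w.im ≠ 0 := by
    intro w hw him
    have hwne := hroot_ne w hw
    have hre : w.re ≠ 0 := fun h => hwne (Complex.ext h him)
    have h2 := congrArg Complex.im hw
    simp [hadef, pow_two, Complex.mul_im, Complex.mul_re, him] at h2
    rcases h2 with h | h
    · exact absurd h (ne_of_gt hz)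
    · exact hre h
  -- the mirror root
  have hmirror : ∀ w : ℂ, a * w ^ 2 + z * w + 1 = 0 →
      a * ((a * w)⁻¹) ^ 2 + z * ((a * w)⁻¹) + 1 = 0 := by
    intro w hw
    have hwne := hroot_ne w hw
    set u := (a * w)⁻¹ with hu_def
    have haw : a * w ≠ 0 := mul_ne_zero ha0 hwne
    have hu : u * (a * w) = 1 := inv_mul_cancel₀ haw
    have key : (a * u ^ 2 + z * u + 1) * (a * w) ^ 2
        = a * (a * w ^ 2 + z * w + 1) := by
      linear_combination (a * (u * (a * w) + 1) + z * a * w) * hu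
    have h0 : (a * u ^ 2 + z * u + 1) * (a * w) ^ 2 = 0 := by
      rw [key, hw, mul_zero]
    exact (mul_eq_zero.mp h0).resolve_right (pow_ne_zero 2 haw)
  have hmirror_im : ∀ w : ℂ, w ≠ 0 → ((a * w)⁻¹).im = -w.im / (r * Complex.normSq w) := by
    intro w hwne
    have hn : 0 < Complex.normSq w := Complex.normSq_pos.mpr hwne
    have h1 : (a * w).im = r * w.im := by simp [hadef, Complex.mul_im]
    have h2 : Complex.normSq (a * w) = r ^ 2 * Complex.normSq w := by
      rw [hadef, Complex.normSq_mul, Complex.normSq_ofReal]; ring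
    rw [Complex.inv_im, h1, h2,
      div_eq_div_iff (mul_pos (pow_pos hr 2) hn).ne' (mul_pos hr hn).ne']
    ring
  -- existence of some root
  obtain ⟨s, hs⟩ := IsAlgClosed.exists_pow_nat_eq (k := ℂ) (z ^ 2 - 4 * a) (n := 2) (by norm_num)
  have hroot1 : a * ((-z + s) / (2 * a)) ^ 2 + z * ((-z + s) / (2 * a)) + 1 = 0 := by
    set w₁ := (-z + s) / (2 * a) with hw1
    have h2a : (2 : ℂ) * a ≠ 0 := mul_ne_zero two_ne_zero ha0
    have hm : w₁ * (2 * a) = -z + s := div_mul_cancel₀ _ h2a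
    have key : (a * w₁ ^ 2 + z * w₁ + 1) * (2 * a) ^ 2
        = a * (s ^ 2 - (z ^ 2 - 4 * a)) := by
      linear_combination (a * (w₁ * (2 * a) + (-z + s)) + 2 * a * z) * hm
    have h0 : (a * w₁ ^ 2 + z * w₁ + 1) * (2 * a) ^ 2 = 0 := by
      rw [key, hs]; ring
    exact (mul_eq_zero.mp h0).resolve_right (pow_ne_zero 2 h2a)
  -- pick a root with positive imaginary part
  obtain ⟨w₀, hw₀, hw₀im⟩ : ∃ w : ℂ, (a * w ^ 2 + z * w + 1 = 0) ∧ 0 < w.im := by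
    set w₁ := (-z + s) / (2 * a) with hw1
    have him1 := hroot_im w₁ hroot1
    rcases lt_or_gt_of_ne him1 with h | h
    · refine ⟨(a * w₁)⁻¹, hmirror w₁ hroot1, ?_⟩
      rw [hmirror_im w₁ (hroot_ne w₁ hroot1)]
      have hn : 0 < Complex.normSq w₁ := Complex.normSq_pos.mpr (hroot_ne w₁ hroot1)
      have : 0 < -w₁.im := by linarith
      positivity
    · exact ⟨w₁, hroot1, h⟩
  refine ⟨w₀, ⟨hw₀, hw₀im⟩, ?_⟩
  rintro w ⟨hw, hwim⟩
  by_contra hne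
  have hd : w - w₀ ≠ 0 := sub_ne_zero_of_ne hne
  have hfac : (a * (w + w₀) + z) * (w - w₀) = 0 := by linear_combination hw - hw₀
  have hsum : a * (w + w₀) = -z := by
    rcases mul_eq_zero.mp hfac with h | h
    · exact eq_neg_of_add_eq_zero_left h
    · exact absurd h hd
  have him : r * (w.im + w₀.im) = -z.im := by
    have := congrArg Complex.im hsum
    simpa [hadef, Complex.mul_im, Complex.add_im] using this
  nlinarith [him, hr, hwim, hw₀im, hz]
end
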